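/- For 1 < σ ≤ 2, the Grünwald coefficients satisfy ∑_{m=0}^{∞} z_m = 0, i.e., the series of z_m converges with sum zero. -/
import Mathlib

/-- Generalized binomial coefficient binom(x, m) = x(x-1)⋯(x-m+1)/m! for real x. -/
noncomputable def rbinom (x : ℝ) (m : ℕ) : ℝ :=
  (∏ i ∈ Finset.range m, (x - i)) / (Nat.factorial m)

/-- Grünwald coefficients z_m = (-1)^m · binom(σ, m). -/
noncomputable def gz (σ : ℝ) (m : ℕ) : ℝ := (-1) ^ m * rbinom σ m

noncomputable def cc (σ : ℝ) (n : ℕ) : ℝ :=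
  (∏ j ∈ Finset.range n, ((j : ℝ) + 1 - σ)) / (Nat.factorial n)

lemma gz_eq (σ : ℝ) (m : ℕ) :
    gz σ m = (∏ i ∈ Finset.range m, ((i : ℝ) - σ)) / (Nat.factorial m) := by
  have h : ∏ i ∈ Finset.range m, ((i : ℝ) - σ)
      = (-1 : ℝ) ^ m * ∏ i ∈ Finset.range m, (σ - i) :=
    calc ∏ i ∈ Finset.range m, ((i : ℝ) - σ)
        = ∏ i ∈ Finset.range m, (-1) * (σ - (i:ℝ)) :=
          Finset.prod_congr rfl (fun i _ => by ring)
      _ = (-1 : ℝ) ^ m * ∏ i ∈ Finset.range m, (σ - i) := by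
          rw [Finset.prod_mul_distrib, Finset.prod_const, Finset.card_range]
  rw [gz, rbinom, h]; ring

lemma sum_gz (σ : ℝ) (n : ℕ) :
    ∑ m ∈ Finset.range (n + 1), gz σ m = cc σ n := by
  induction n with
  | zero => simp [gz_eq, cc]
  | succ n ih =>
    have e1 : ∏ i ∈ Finset.range (n + 1), ((i : ℝ) - σ)
        = (∏ j ∈ Finset.range n, ((j : ℝ) + 1 - σ)) * (0 - σ) := by
      rw [Finset.prod_range_succ']
      congr 1
      · exact Finset.prod_congr rfl (fun j _ => by push_cast; ring)
      · norm_num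
    rw [Finset.sum_range_succ, ih, gz_eq, e1, cc, cc, Finset.prod_range_succ]
    have hfac : ((Nat.factorial (n + 1) : ℝ)) = (n + 1) * Nat.factorial n := by
      push_cast [Nat.factorial_succ]; ring
    have h0 : ((Nat.factorial n : ℝ)) ≠ 0 := by positivity
    have h1 : ((n : ℝ) + 1) ≠ 0 := by positivity
    rw [hfac]
    field_simp
    ring

lemma prod_abs_le (σ : ℝ) (h1 : 1 < σ) (h2 : σ ≤ 2) (n : ℕ) :
    |∏ j ∈ Finset.range (n + 1), ((j : ℝ) + 1 - σ)| ≤ Nat.factorial n := by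
  induction n with
  | zero => simp; rw [abs_sub_comm, abs_of_nonneg (by linarith)]; linarith
  | succ n ih =>
    rw [Finset.prod_range_succ, abs_mul]
    have hb : |(((n : ℕ) + 1 : ℕ) : ℝ) + 1 - σ| ≤ (n + 1 : ℝ) := by
      push_cast
      rw [abs_of_nonneg (by linarith)]
      linarith
    calc |∏ j ∈ Finset.range (n + 1), ((j : ℝ) + 1 - σ)| * |((n + 1 : ℕ) : ℝ) + 1 - σ|
        ≤ (Nat.factorial n : ℝ) * (n + 1 : ℝ) := by
          apply mul_le_mul ih (by exact_mod_cast hb) (abs_nonneg _) (by positivity)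
      _ = (Nat.factorial (n + 1) : ℝ) := by
          push_cast [Nat.factorial_succ]; ring

lemma cc_abs_le (σ : ℝ) (h1 : 1 < σ) (h2 : σ ≤ 2) (n : ℕ) :
    |cc σ (n + 1)| ≤ 1 / (n + 1 : ℝ) := by
  rw [cc, abs_div, abs_of_nonneg (by positivity : (0:ℝ) ≤ (Nat.factorial (n+1) : ℝ))]
  rw [div_le_div_iff₀ (by positivity) (by positivity)]
  calc |∏ j ∈ Finset.range (n + 1), ((j : ℝ) + 1 - σ)| * ((n:ℝ) + 1)
      ≤ (Nat.factorial n : ℝ) * ((n:ℝ) + 1) := by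
        apply mul_le_mul_of_nonneg_right (prod_abs_le σ h1 h2 n) (by positivity)
    _ = 1 * (Nat.factorial (n + 1) : ℝ) := by push_cast [Nat.factorial_succ]; ring

lemma cc_tendsto (σ : ℝ) (h1 : 1 < σ) (h2 : σ ≤ 2) :
    Filter.Tendsto (fun n => cc σ n) Filter.atTop (nhds 0) := by
  rw [← Filter.tendsto_add_atTop_iff_nat 1]
  exact squeeze_zero_norm (fun n => by
    rw [Real.norm_eq_abs]; exact cc_abs_le σ h1 h2 n)
    tendsto_one_div_add_atTop_nhds_zero_nat

lemma gz_nonneg (σ : ℝ) (h1 : 1 < σ) (h2 : σ ≤ 2) (m : ℕ) :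
    0 ≤ gz σ (m + 2) := by
  rw [gz_eq]
  apply div_nonneg _ (by positivity)
  rw [Finset.prod_range_succ', Finset.prod_range_succ']
  have hP : (0:ℝ) ≤ ∏ j ∈ Finset.range m, (((j + 1 + 1 : ℕ) : ℝ) - σ) := by
    apply Finset.prod_nonneg
    intro j _
    push_cast; linarith
  have h01 : (0:ℝ) ≤ ((((0:ℕ)+1:ℕ):ℝ) - σ) * (((0:ℕ):ℝ) - σ) := by
    push_cast
    nlinarith
  calc (0:ℝ) ≤ (∏ j ∈ Finset.range m, (((j + 1 + 1 : ℕ) : ℝ) - σ)) *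
      (((((0:ℕ)+1:ℕ):ℝ) - σ) * (((0:ℕ):ℝ) - σ)) := mul_nonneg hP h01
    _ = (∏ x ∈ Finset.range m, ((↑(x + 1 + 1):ℝ) - σ)) * ((↑(0+1:ℕ):ℝ) - σ) * ((↑(0:ℕ):ℝ) - σ) := by
        ring

theorem stmt_5 (σ : ℝ) (h1 : 1 < σ) (h2 : σ ≤ 2) :
    HasSum (fun m : ℕ => gz σ m) 0 := by
  have hsum : Summable (fun m : ℕ => gz σ m) := by
    rw [← summable_nat_add_iff 2]
    apply summable_of_sum_range_le (c := σ) (fun n => gz_nonneg σ h1 h2 n)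
    intro n
    have key : ∑ i ∈ Finset.range n, gz σ (i + 2)
        = cc σ (n + 1) - gz σ 0 - gz σ 1 := by
      have h := sum_gz σ (n + 1)
      rw [Finset.sum_range_succ', Finset.sum_range_succ'] at h
      simp only [show ∀ i : ℕ, i + 1 + 1 = i + 2 from fun _ => rfl,
        show (0:ℕ) + 1 = 1 from rfl] at h
      linarith [h]
    have h0 : gz σ 0 = 1 := by simp [gz_eq]
    have h1' : gz σ 1 = -σ := by simp [gz_eq]
    have hcc : cc σ (n + 1) ≤ 1 := by
      have hle := cc_abs_le σ h1 h2 n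
      have h2' : (1:ℝ) / (n + 1 : ℝ) ≤ 1 := by
        rw [div_le_one (by positivity)]; linarith [Nat.cast_nonneg (α := ℝ) n]
      calc cc σ (n + 1) ≤ |cc σ (n + 1)| := le_abs_self _
        _ ≤ 1 := le_trans hle h2'
    rw [key, h0, h1']
    linarith
  have hts := hsum.hasSum
  have htend := hts.tendsto_sum_nat
  have htend2 : Filter.Tendsto (fun n => ∑ m ∈ Finset.range n, gz σ m)
      Filter.atTop (nhds 0) := by
    rw [← Filter.tendsto_add_atTop_iff_nat 1]
    have e : (fun n => ∑ m ∈ Finset.range (n + 1), gz σ m) = fun n => cc σ n := by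
      funext n; exact sum_gz σ n
    rw [e]
    exact cc_tendsto σ h1 h2
  have heq := tendsto_nhds_unique htend htend2
  rwa [heq] at hts
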